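/- Let m ≥ 38 be an even integer and let G be a graph attaining the maximum spectral radius among all H(4,3)-free graphs with m edges and no isolated vertices. Then G is connected. -/

import Mathlib

open SimpleGraph Matrix

/-- `H` occurs as a subgraph of `G`: an injective map sending adjacent vertices to
adjacent vertices. -/
def ContainsSub {α β : Type*} (H : SimpleGraph α) (G : SimpleGraph β) : Prop :=
  ∃ f : α → β, Function.Injective f ∧ ∀ ⦃a b⦄, H.Adj a b → G.Adj (f a) (f b)

/-- The graph `H(4,3)`: a 4-cycle `0-1-2-3-0` and a triangle `0-4-5-0`
sharing the common vertex `0`. -/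
def H43 : SimpleGraph (Fin 6) :=
  SimpleGraph.fromEdgeSet {s(0,1), s(1,2), s(2,3), s(3,0), s(0,4), s(4,5), s(5,0)}

/-- `G` is `H(4,3)`-free. -/
def H43Free {β : Type*} (G : SimpleGraph β) : Prop := ¬ ContainsSub H43 G

open Classical in
/-- The real adjacency matrix of a simple graph. -/
noncomputable def adjMat {V : Type*} (G : SimpleGraph V) : Matrix V V ℝ :=
  fun i j => if G.Adj i j then 1 else 0

/-- The spectral radius of a finite simple graph: the largest eigenvalue of its
adjacency matrix. -/
noncomputable def specRad {V : Type*} [Fintype V] (G : SimpleGraph V) : ℝ :=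
  sSup {t : ℝ | ∃ x : V → ℝ, x ≠ 0 ∧ (adjMat G).mulVec x = t • x}

/-- `S_{n,2} = K₂ ∨ (n-2)K₁`: vertices `0` and `1` are adjacent to everything. -/
def Sgraph (n : ℕ) : SimpleGraph (Fin n) where
  Adj i j := i ≠ j ∧ (i.val < 2 ∨ j.val < 2)
  symm := ⟨by rintro i j ⟨h1, h2⟩; exact ⟨h1.symm, h2.symm⟩⟩
  loopless := ⟨by rintro i ⟨h1, _⟩; exact h1 rfl⟩

/-- `S⁻_{n,2}`: the graph `S_{n,2}` with the edge `{1,2}` (an edge incident to a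
vertex of degree two) deleted. -/
def SgraphMinus (n : ℕ) : SimpleGraph (Fin n) where
  Adj i j := i ≠ j ∧ (i.val < 2 ∨ j.val < 2) ∧
    ¬(i.val = 1 ∧ j.val = 2) ∧ ¬(i.val = 2 ∧ j.val = 1)
  symm := ⟨by
    rintro i j ⟨h1, h2, h3, h4⟩
    exact ⟨h1.symm, h2.symm, fun hc => h4 ⟨hc.2, hc.1⟩, fun hc => h3 ⟨hc.2, hc.1⟩⟩⟩
  loopless := ⟨by rintro i ⟨h1, _⟩; exact h1 rfl⟩

/-- The graph obtained from `S_{k,2}` (on vertices `0,…,k-1`, with `0,1` dominating)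
by joining the maximum degree vertex `0` to `l` new vertices `k,…,k+l-1`. -/
def Fgraph (k l : ℕ) : SimpleGraph (Fin (k + l)) where
  Adj i j := i ≠ j ∧ (i.val = 0 ∨ j.val = 0 ∨
    (i.val < k ∧ j.val < k ∧ (i.val = 1 ∨ j.val = 1)))
  symm := ⟨by
    rintro i j ⟨h1, h2⟩
    refine ⟨h1.symm, ?_⟩
    rcases h2 with h | h | ⟨ha, hb, hc⟩
    · exact Or.inr (Or.inl h)
    · exact Or.inl h
    · exact Or.inr (Or.inr ⟨hb, ha, hc.symm⟩)⟩
  loopless := ⟨by rintro i ⟨h1, _⟩; exact h1 rfl⟩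

/-- The star `K_{1,t}` with center `0`. -/
def starG (t : ℕ) : SimpleGraph (Fin (t + 1)) where
  Adj i j := i ≠ j ∧ (i.val = 0 ∨ j.val = 0)
  symm := ⟨by rintro i j ⟨h1, h2⟩; exact ⟨h1.symm, h2.symm⟩⟩
  loopless := ⟨by rintro i ⟨h1, _⟩; exact h1 rfl⟩

/-- `e(S)`: the number of edges of `G` with both endpoints in `S`. -/
noncomputable def eIn {V : Type*} (G : SimpleGraph V) (S : Set V) : ℕ :=
  {e ∈ G.edgeSet | ∀ v ∈ e, v ∈ S}.ncard

/-- `e(S,T)`: the number of edges of `G` with one endpoint in `S` and the other in `T`. -/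
noncomputable def eBetween {V : Type*} (G : SimpleGraph V) (S T : Set V) : ℕ :=
  {e ∈ G.edgeSet | ∃ a ∈ S, ∃ b ∈ T, e = s(a, b)}.ncard

/-- `G` attains the maximum spectral radius among all `H(4,3)`-free graphs with `m`
edges and no isolated vertices. -/
def IsExtremal (m : ℕ) {V : Type*} [Fintype V] (G : SimpleGraph V) : Prop :=
  H43Free G ∧ G.edgeSet.ncard = m ∧ (∀ v : V, ∃ w, G.Adj v w) ∧
    ∀ (n : ℕ) (G' : SimpleGraph (Fin n)), H43Free G' → G'.edgeSet.ncard = m →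
      (∀ v, ∃ w, G'.Adj v w) → specRad G' ≤ specRad G

/-!
Suppose an extremal graph `G` is disconnected. Take an eigenvector `x` of `ρ(G)` and a vertex `u`
with `x u ≠ 0`; the restriction `y` of `x` to the component of `u` is still an eigenvector. Delete
an edge `pq` of another component and attach a new pendant vertex `w` to `u`. The number of edges is
unchanged, and the new graph is still `H(4,3)`-free because every vertex of `H(4,3)` has two
neighbours. On the new graph the test vector `y + ε e_w` has Rayleigh quotient
`ρ(G) + (2 ε y_u - ρ(G) ε²) / (‖y‖² + ε²)`, which exceeds `ρ(G)` for a suitable `ε`, even after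
discarding the vertices that the deletion of `pq` left isolated. This contradicts maximality.
-/

namespace Matrix.IsHermitian

variable {n : Type*} [Fintype n] [DecidableEq n] {A : Matrix n n ℝ}

lemma dotProduct_eq_sum_eigenvectorBasis (hA : A.IsHermitian) (x y : n → ℝ) :
    x ⬝ᵥ y = ∑ i, (⇑(hA.eigenvectorBasis i) ⬝ᵥ x) * (⇑(hA.eigenvectorBasis i) ⬝ᵥ y) := by
  have := hA.eigenvectorBasis.sum_inner_mul_inner (WithLp.toLp 2 x) (WithLp.toLp 2 y)
  simp only [EuclideanSpace.inner_eq_star_dotProduct, star_trivial] at this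
  rw [dotProduct_comm x y, ← this]
  exact Finset.sum_congr rfl fun i _ => by rw [dotProduct_comm y]

lemma eigenvectorBasis_dotProduct_mulVec (hA : A.IsHermitian) (i : n) (x : n → ℝ) :
    ⇑(hA.eigenvectorBasis i) ⬝ᵥ A *ᵥ x = hA.eigenvalues i * (⇑(hA.eigenvectorBasis i) ⬝ᵥ x) := by
  rw [dotProduct_mulVec, ← mulVec_transpose, ← conjTranspose_eq_transpose_of_trivial, hA.eq,
    hA.mulVec_eigenvectorBasis, smul_dotProduct, smul_eq_mul]

lemma dotProduct_mulVec_le (hA : A.IsHermitian) {c : ℝ} (hc : ∀ i, hA.eigenvalues i ≤ c)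
    (x : n → ℝ) : x ⬝ᵥ A *ᵥ x ≤ c * (x ⬝ᵥ x) := by
  rw [hA.dotProduct_eq_sum_eigenvectorBasis, hA.dotProduct_eq_sum_eigenvectorBasis x x,
    Finset.mul_sum]
  refine Finset.sum_le_sum fun i _ => ?_
  rw [eigenvectorBasis_dotProduct_mulVec, mul_left_comm]
  exact mul_le_mul_of_nonneg_right (hc i) (mul_self_nonneg _)

lemma exists_isGreatest_and_dotProduct_mulVec_le [Nonempty n] (hA : A.IsHermitian) :
    ∃ μ, IsGreatest {t : ℝ | ∃ x : n → ℝ, x ≠ 0 ∧ A *ᵥ x = t • x} μ ∧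
      ∀ x, x ⬝ᵥ A *ᵥ x ≤ μ * (x ⬝ᵥ x) := by
  obtain ⟨i₀, hi₀⟩ := Finite.exists_max hA.eigenvalues
  have hle := hA.dotProduct_mulVec_le hi₀
  refine ⟨hA.eigenvalues i₀, ⟨⟨_, ?_, hA.mulVec_eigenvectorBasis i₀⟩, ?_⟩, hle⟩
  · exact fun h => hA.eigenvectorBasis.orthonormal.ne_zero i₀ (by ext v; exact congrFun h v)
  · rintro t ⟨x, hx, hAx⟩
    have hpos : 0 < x ⬝ᵥ x :=
      (dotProduct_self_star_nonneg x).lt_of_ne' (by simpa [dotProduct_self_eq_zero] using hx)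
    have := hle x
    rw [hAx, dotProduct_smul, smul_eq_mul] at this
    exact le_of_mul_le_mul_right this hpos

end Matrix.IsHermitian

lemma exists_mul_sq_lt_two_mul (ρ a : ℝ) (ha : a ≠ 0) : ∃ ε : ℝ, ρ * ε ^ 2 < 2 * ε * a := by
  set t := 1 / (|ρ| + 1)
  have ht : 0 < t := by positivity
  have hρt : ρ * t < 1 := by
    calc ρ * t ≤ |ρ| * t := mul_le_mul_of_nonneg_right (le_abs_self ρ) ht.le
      _ < (|ρ| + 1) * t := by gcongr; linarith
      _ = 1 := mul_one_div_cancel (by positivity)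
  refine ⟨t * a, ?_⟩
  have hta : 0 < t * a ^ 2 := by positivity
  nlinarith [mul_lt_mul_of_pos_right hρt hta]

lemma dotProduct_elim'_self {V : Type*} [Fintype V] (ε : ℝ) (y : V → ℝ) :
    Option.elim' ε y ⬝ᵥ Option.elim' ε y = y ⬝ᵥ y + ε ^ 2 := by
  simp only [dotProduct, Fintype.sum_option, Option.elim']
  ring

namespace SimpleGraph

variable {V : Type*}

lemma adjMat_isHermitian (G : SimpleGraph V) : (adjMat G).IsHermitian := by
  ext i j
  simp only [conjTranspose_apply, adjMat, star_trivial]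
  rw [G.adj_comm]

open Classical in
lemma dotProduct_adjMat_mulVec [Fintype V] (G : SimpleGraph V) (x : V → ℝ) :
    x ⬝ᵥ adjMat G *ᵥ x = ∑ i, ∑ j, if G.Adj i j then x i * x j else 0 := by
  simp only [dotProduct, mulVec, adjMat, Finset.mul_sum]
  refine Finset.sum_congr rfl fun i _ => Finset.sum_congr rfl fun j _ => ?_
  split_ifs <;> ring

lemma exists_adjMat_mulVec_eq_specRad_smul [Fintype V] [Nonempty V] (G : SimpleGraph V) :
    ∃ x, x ≠ 0 ∧ adjMat G *ᵥ x = specRad G • x := by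
  classical
  obtain ⟨μ, hμ, -⟩ := G.adjMat_isHermitian.exists_isGreatest_and_dotProduct_mulVec_le
  rw [specRad, hμ.csSup_eq]
  exact hμ.1

lemma dotProduct_adjMat_mulVec_le [Fintype V] (G : SimpleGraph V) (x : V → ℝ) :
    x ⬝ᵥ adjMat G *ᵥ x ≤ specRad G * (x ⬝ᵥ x) := by
  classical
  cases isEmpty_or_nonempty V
  · simp [dotProduct]
  obtain ⟨μ, hμ, hle⟩ := G.adjMat_isHermitian.exists_isGreatest_and_dotProduct_mulVec_le
  rw [specRad, hμ.csSup_eq]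
  exact hle x

lemma adjMat_mulVec_indicator_reachable [Fintype V] (G : SimpleGraph V) (u : V) (x : V → ℝ) :
    adjMat G *ᵥ {v | G.Reachable u v}.indicator x =
      {v | G.Reachable u v}.indicator (adjMat G *ᵥ x) := by
  set C := {v | G.Reachable u v}
  ext v
  by_cases hv : G.Reachable u v
  · rw [Set.indicator_of_mem (s := C) hv]
    refine Finset.sum_congr rfl fun w _ => ?_
    by_cases hvw : G.Adj v w
    · rw [Set.indicator_of_mem (s := C) (hv.trans hvw.reachable)]
    · simp [adjMat, hvw]
  · rw [Set.indicator_of_notMem (s := C) hv]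
    refine Finset.sum_eq_zero fun w _ => ?_
    by_cases hvw : G.Adj v w
    · rw [Set.indicator_of_notMem (s := C) (fun hw => hv (hw.trans hvw.reachable.symm)), mul_zero]
    · simp [adjMat, hvw]

section Comap

variable {W : Type*} (G : SimpleGraph W) {g : V → W}

lemma exists_fin_injective_range_eq_support [Finite W] :
    ∃ (n : ℕ) (g : Fin n → W), Function.Injective g ∧ Set.range g = G.support := by
  obtain ⟨n, ⟨e⟩⟩ := Finite.exists_equiv_fin G.support
  exact ⟨n, Subtype.val ∘ e.symm, Subtype.val_injective.comp e.symm.injective,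
    by rw [Set.range_comp, e.symm.range_eq_univ, Set.image_univ, Subtype.range_coe]⟩

lemma exists_comap_adj_of_range_eq_support (hg : Set.range g = G.support) (a : V) :
    ∃ b, (G.comap g).Adj a b := by
  obtain ⟨w, hw⟩ := G.mem_support.mp (hg ▸ Set.mem_range_self a)
  obtain ⟨b, rfl⟩ : w ∈ Set.range g := hg ▸ hw.symm.mem_support_left
  exact ⟨b, hw⟩

lemma ncard_edgeSet_comap (hg : Function.Injective g) (hsupp : G.support ⊆ Set.range g) :
    (G.comap g).edgeSet.ncard = G.edgeSet.ncard := by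
  suffices Sym2.map g '' (G.comap g).edgeSet = G.edgeSet by
    rw [← this, Set.ncard_image_of_injective _ (Sym2.map.injective hg)]
  ext e
  induction e using Sym2.ind with
  | _ a b =>
    constructor
    · rintro ⟨e', he', heq⟩
      induction e' using Sym2.ind with
      | _ a' b' =>
        rw [Sym2.map_mk, Sym2.eq_iff] at heq
        rcases heq with ⟨rfl, rfl⟩ | ⟨rfl, rfl⟩
        · exact he'
        · exact G.adj_symm he'
    · intro hab
      obtain ⟨a', rfl⟩ := hsupp (G.mem_support.mpr ⟨b, hab⟩)
      obtain ⟨b', rfl⟩ := hsupp (G.mem_support.mpr ⟨_, G.adj_symm hab⟩)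
      exact ⟨s(a', b'), hab, rfl⟩

variable [Fintype V] [Fintype W]

lemma dotProduct_comp_of_injective (hg : Function.Injective g) {x y : W → ℝ}
    (hx : ∀ w ∉ Set.range g, x w = 0) : (x ∘ g) ⬝ᵥ (y ∘ g) = x ⬝ᵥ y :=
  Fintype.sum_of_injective g hg _ _ (fun w hw => by simp [hx w hw]) fun _ => rfl

lemma dotProduct_adjMat_comap_mulVec (hg : Function.Injective g) {x : W → ℝ}
    (hx : ∀ w ∉ Set.range g, x w = 0) :
    (x ∘ g) ⬝ᵥ adjMat (G.comap g) *ᵥ (x ∘ g) = x ⬝ᵥ adjMat G *ᵥ x := by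
  classical
  simp only [dotProduct_adjMat_mulVec]
  refine Fintype.sum_of_injective g hg _ _ (fun w hw => by simp [hx w hw]) fun a => ?_
  exact Fintype.sum_of_injective g hg _ _ (fun w hw => by simp [hx w hw]) fun _ => rfl

lemma dotProduct_adjMat_mulVec_le_specRad_comap (hg : Function.Injective g) {x : W → ℝ}
    (hx : ∀ w ∉ Set.range g, x w = 0) :
    x ⬝ᵥ adjMat G *ᵥ x ≤ specRad (G.comap g) * (x ⬝ᵥ x) := by
  rw [← G.dotProduct_adjMat_comap_mulVec hg hx, ← dotProduct_comp_of_injective hg hx]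
  exact (G.comap g).dotProduct_adjMat_mulVec_le _

end Comap

section DeleteEdgeAddPendant

variable (G : SimpleGraph V) (p q u : V)

def deleteEdgeAddPendant : SimpleGraph (Option V) :=
  (G.deleteEdges {s(p, q)}).map Function.Embedding.some ⊔ edge (some u) none

variable {G p q u}

@[simp]
lemma deleteEdgeAddPendant_adj_some_some {a b : V} :
    (G.deleteEdgeAddPendant p q u).Adj (some a) (some b) ↔ G.Adj a b ∧ s(a, b) ≠ s(p, q) := by
  simp only [deleteEdgeAddPendant, sup_adj, map_adj, deleteEdges_adj, edge_adj]
  simp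

@[simp]
lemma deleteEdgeAddPendant_adj_none_left {w : Option V} :
    (G.deleteEdgeAddPendant p q u).Adj none w ↔ w = some u := by
  simp only [deleteEdgeAddPendant, sup_adj, map_adj, deleteEdges_adj, edge_adj]
  aesop

@[simp]
lemma deleteEdgeAddPendant_adj_none_right {w : Option V} :
    (G.deleteEdgeAddPendant p q u).Adj w none ↔ w = some u := by
  rw [adj_comm, deleteEdgeAddPendant_adj_none_left]

lemma ncard_edgeSet_deleteEdgeAddPendant [Finite V] (hpq : G.Adj p q) :
    (G.deleteEdgeAddPendant p q u).edgeSet.ncard = G.edgeSet.ncard := by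
  have hdisj : Disjoint (Function.Embedding.some.sym2Map '' (G.edgeSet \ {s(p, q)}))
      (edge (some u) none).edgeSet := by
    rw [edgeSet_edge_of_ne (Option.some_ne_none u), Set.disjoint_singleton_right]
    rintro ⟨e, -, he⟩
    induction e using Sym2.ind with
    | _ a b => simp at he
  rw [deleteEdgeAddPendant, edgeSet_sup, edgeSet_map, edgeSet_deleteEdges,
    Set.ncard_union_eq hdisj, Set.ncard_image_of_injective _ (Function.Embedding.injective _),
    edgeSet_edge_of_ne (Option.some_ne_none u), Set.ncard_singleton,
    Set.ncard_sdiff_singleton_add_one (show s(p, q) ∈ G.edgeSet from hpq)]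

lemma some_mem_support_deleteEdgeAddPendant {v : V} (hv : v ∈ G.support) (hp : v ≠ p)
    (hq : v ≠ q) : some v ∈ (G.deleteEdgeAddPendant p q u).support := by
  obtain ⟨w, hw⟩ := hv
  refine ⟨some w, deleteEdgeAddPendant_adj_some_some.mpr ⟨hw, ?_⟩⟩
  rw [Ne, Sym2.eq_iff]
  tauto

lemma none_mem_support_deleteEdgeAddPendant : none ∈ (G.deleteEdgeAddPendant p q u).support :=
  ⟨some u, deleteEdgeAddPendant_adj_none_left.mpr rfl⟩

variable [Fintype V]

lemma dotProduct_adjMat_deleteEdgeAddPendant_mulVec {y : V → ℝ} (hp : y p = 0) (ε : ℝ) :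
    Option.elim' ε y ⬝ᵥ adjMat (G.deleteEdgeAddPendant p q u) *ᵥ Option.elim' ε y =
      y ⬝ᵥ adjMat G *ᵥ y + 2 * ε * y u := by
  classical
  have hpq : ∀ a b, s(a, b) = s(p, q) → y a * y b = 0 := by
    intro a b h
    rcases Sym2.eq_iff.mp h with ⟨rfl, -⟩ | ⟨-, rfl⟩ <;> simp [hp]
  have hterm : ∀ a b, (if G.Adj a b ∧ s(a, b) ≠ s(p, q) then y a * y b else 0) =
      if G.Adj a b then y a * y b else 0 := by
    intro a b
    by_cases h : s(a, b) = s(p, q) <;> simp [h, hpq a b]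
  simp only [dotProduct_adjMat_mulVec, Fintype.sum_option, Option.elim',
    deleteEdgeAddPendant_adj_none_left, deleteEdgeAddPendant_adj_none_right,
    deleteEdgeAddPendant_adj_some_some, hterm, Option.some_inj,
    Finset.sum_add_distrib, Finset.sum_ite_eq', Finset.mem_univ, if_true]
  ring

theorem specRad_lt_specRad_comap_deleteEdgeAddPendant {W : Type*} [Fintype W]
    (hniso : ∀ v, ∃ w, G.Adj v w) {x : V → ℝ} (hx : adjMat G *ᵥ x = specRad G • x)
    (hu : x u ≠ 0) (hup : ¬G.Reachable u p) (hpq : G.Adj p q) {g : W → Option V}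
    (hg : Function.Injective g) (hsupp : (G.deleteEdgeAddPendant p q u).support ⊆ Set.range g) :
    specRad G < specRad ((G.deleteEdgeAddPendant p q u).comap g) := by
  set C := {v | G.Reachable u v}
  set y := C.indicator x
  have hy : adjMat G *ᵥ y = specRad G • y := by
    rw [adjMat_mulVec_indicator_reachable, hx]
    ext v
    exact Set.indicator_const_smul_apply C (specRad G) x v
  have hyu : y u = x u := Set.indicator_of_mem (s := C) (Reachable.refl u) x
  have hyp : y p = 0 := Set.indicator_of_notMem (s := C) hup x
  have hyq : y q = 0 :=
    Set.indicator_of_notMem (s := C) (fun h => hup (h.trans hpq.symm.reachable)) x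
  obtain ⟨ε, hε⟩ := exists_mul_sq_lt_two_mul (specRad G) (y u) (hyu ▸ hu)
  have hz : ∀ w ∉ Set.range g, Option.elim' ε y w = 0 := by
    rintro (_ | v) hw
    · exact absurd (hsupp none_mem_support_deleteEdgeAddPendant) hw
    · by_contra hv
      have hr : G.Reachable u v := by
        by_contra h
        exact hv (Set.indicator_of_notMem (s := C) h x)
      refine hw (hsupp (some_mem_support_deleteEdgeAddPendant (hniso v) ?_ ?_))
      · rintro rfl; exact hv hyp
      · rintro rfl; exact hv hyq
  have hle := (G.deleteEdgeAddPendant p q u).dotProduct_adjMat_mulVec_le_specRad_comap hg hz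
  rw [dotProduct_adjMat_deleteEdgeAddPendant_mulVec hyp, hy, dotProduct_smul, smul_eq_mul,
    dotProduct_elim'_self] at hle
  have hzz : 0 ≤ y ⬝ᵥ y + ε ^ 2 :=
    add_nonneg (Finset.sum_nonneg fun v _ => mul_self_nonneg (y v)) (sq_nonneg ε)
  exact lt_of_mul_lt_mul_right (by linarith) hzz

end DeleteEdgeAddPendant

end SimpleGraph

lemma ContainsSub.of_comap {α V W : Type*} {H : SimpleGraph α} {G : SimpleGraph W} {g : V → W}
    (hg : Function.Injective g) : ContainsSub H (G.comap g) → ContainsSub H G :=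
  fun ⟨f, hf, hadj⟩ => ⟨g ∘ f, hg.comp hf, fun _ _ h => hadj h⟩

lemma ContainsSub.of_deleteEdgeAddPendant {α V : Type*} {H : SimpleGraph α} {G : SimpleGraph V}
    {p q u : V} (hH : ∀ i, ∃ j k, j ≠ k ∧ H.Adj i j ∧ H.Adj i k)
    (h : ContainsSub H (G.deleteEdgeAddPendant p q u)) : ContainsSub H G := by
  obtain ⟨f, hf, hadj⟩ := h
  have hsome : ∀ i, ∃ v, f i = some v := by
    intro i
    obtain ⟨j, k, hjk, hj, hk⟩ := hH i
    refine Option.ne_none_iff_exists'.mp fun hi => hjk (hf ?_)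
    have hj' := hadj hj
    have hk' := hadj hk
    rw [hi, SimpleGraph.deleteEdgeAddPendant_adj_none_left] at hj' hk'
    rw [hj', hk']
  choose f' hf' using hsome
  refine ⟨f', fun i j h => hf (by rw [hf', hf', h]), fun i j h => ?_⟩
  have := hadj h
  rw [hf', hf', SimpleGraph.deleteEdgeAddPendant_adj_some_some] at this
  exact this.1

lemma H43_exists_two_adj (i : Fin 6) : ∃ j k, j ≠ k ∧ H43.Adj i j ∧ H43.Adj i k := by
  simp only [H43, SimpleGraph.fromEdgeSet_adj, Set.mem_insert_iff, Set.mem_singleton_iff]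
  decide +revert

theorem stmt6_general {V : Type*} [Fintype V] (m : ℕ) (hm : 38 ≤ m)
    (G : SimpleGraph V) (hext : IsExtremal m G) :
    G.Connected := by
  obtain ⟨hfree, hcard, hniso, hmax⟩ := hext
  obtain ⟨e, -⟩ := Set.nonempty_of_ncard_ne_zero (hcard ▸ (by omega : m ≠ 0))
  have : Nonempty V := ⟨e.out.1⟩
  by_contra hcon
  obtain ⟨x, hx0, hx⟩ := G.exists_adjMat_mulVec_eq_specRad_smul
  obtain ⟨u, hu⟩ := Function.ne_iff.mp hx0
  obtain ⟨p, hup⟩ : ∃ p, ¬G.Reachable u p := by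
    by_contra! h
    exact hcon ((G.connected_iff_exists_forall_reachable).mpr ⟨u, h⟩)
  obtain ⟨q, hpq⟩ := hniso p
  set G' := G.deleteEdgeAddPendant p q u
  obtain ⟨n, g, hg, hrange⟩ := G'.exists_fin_injective_range_eq_support
  refine (G.specRad_lt_specRad_comap_deleteEdgeAddPendant hniso hx hu hup hpq hg
    hrange.ge).not_ge (hmax n _ ?_ ?_ (G'.exists_comap_adj_of_range_eq_support hrange))
  · exact fun h => hfree ((h.of_comap hg).of_deleteEdgeAddPendant H43_exists_two_adj)
  · rw [G'.ncard_edgeSet_comap hg hrange.ge, ncard_edgeSet_deleteEdgeAddPendant hpq, hcard]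

/-- For even `m ≥ 38`, a graph attaining the maximum spectral radius
among all `H(4,3)`-free graphs with `m` edges and no isolated vertices is connected. -/
theorem stmt6 {V : Type*} [Fintype V] (m : ℕ) (hm : 38 ≤ m) (hme : Even m)
    (G : SimpleGraph V) (hext : IsExtremal m G) :
    G.Connected :=
  stmt6_general m hm G hext
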